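/- Let α > 0, β ∈ ℂ, and let 𝔛, Λ, ΛH, K_𝔛, K^{≥0}_𝔛, π^H be as in the ℓ¹-model of the loop algebra. Then for every H ∈ K_𝔛 ∩ ΛH there exists P ∈ K^{≥0}_𝔛 such that the zeroth coefficient P₀ preserves the line ℂ·e₁ (i.e. the (2,1)-entry of P₀ vanishes) and π^H(P) = H. -/

import Mathlib

/-
Take `P` to be `2H` on positive indices, zero on negative ones, and `H₀ + S` at `0`. Since
`H* = −H`, the negative coefficients of `H` are determined by the positive ones, so
`π^H(P) = H` as soon as the correction `S` is skew-Hermitian. In Lean's `0`-based indexing,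
`S 1 0 = −H₀ 1 0` kills the `(2,1)`-entry of `P₀`, `S 0 1 = H₀ 0 1` keeps the coefficient `1`
of `tr(𝔛P)` zero, and a purely imaginary diagonal `diag(s, −s)` with
`2μs = −2 Re(β · H₁ 1 0)` (solvable since `μ ≠ 0`) makes the coefficient `0` vanish.
-/

open Complex ComplexConjugate Matrix

noncomputable section

attribute [local instance] Matrix.normedAddCommGroup

/-- Membership in the ℓ¹-model `Λ` of the Wiener loop algebra `Λsl(2,ℂ)`:
absolutely summable coefficients, all traceless. -/
def memL (ξ : ℤ → Matrix (Fin 2) (Fin 2) ℂ) : Prop :=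
  Summable (fun k => ‖ξ k‖) ∧ ∀ k, (ξ k).trace = 0

/-- The coefficientwise involution `(ξ*)_k = −(−1)^k·(ξ_{−k})ᴴ`. -/
def starSeq (ξ : ℤ → Matrix (Fin 2) (Fin 2) ℂ) : ℤ → Matrix (Fin 2) (Fin 2) ℂ :=
  fun k => -((-1 : ℂ) ^ k • (ξ (-k))ᴴ)

/-- The projection `π^H(ξ) = ½(ξ − ξ*)` onto the Hermitian-symmetric part. -/
def piH (ξ : ℤ → Matrix (Fin 2) (Fin 2) ℂ) : ℤ → Matrix (Fin 2) (Fin 2) ℂ :=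
  fun k => (1 / 2 : ℂ) • (ξ k - starSeq ξ k)

/-- The loop `𝔛` with coefficients `𝔛₋₁ = β·E₁₂`, `𝔛₀ = diag(μ,−μ)` (`μ = i√(α²+|β|²)`),
`𝔛₁ = conj(β)·E₂₁`, and `𝔛_k = 0` otherwise. -/
def XX (α : ℝ) (β : ℂ) : ℤ → Matrix (Fin 2) (Fin 2) ℂ := fun k =>
  if k = -1 then β • !![0, 1; 0, 0]
  else if k = 0 then
    !![Complex.I * ((Real.sqrt (α ^ 2 + Complex.normSq β) : ℝ) : ℂ), 0;
       0, -(Complex.I * ((Real.sqrt (α ^ 2 + Complex.normSq β) : ℝ) : ℂ))]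
  else if k = 1 then (conj β) • !![0, 0; 1, 0]
  else 0

/-- The condition `tr(𝔛ξ) = 0`, coefficient by coefficient. -/
def Kcond (α : ℝ) (β : ℂ) (ξ : ℤ → Matrix (Fin 2) (Fin 2) ℂ) : Prop :=
  ∀ k : ℤ, (XX α β (-1) * ξ (k + 1)).trace + (XX α β 0 * ξ k).trace
      + (XX α β 1 * ξ (k - 1)).trace = 0

abbrev Mat := Matrix (Fin 2) (Fin 2) ℂ

lemma trace_XX_mul_add (α : ℝ) (β : ℂ) (ξ : ℤ → Mat) (k : ℤ) :
    (XX α β (-1) * ξ (k + 1)).trace + (XX α β 0 * ξ k).trace + (XX α β 1 * ξ (k - 1)).trace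
      = β * ξ (k + 1) 1 0 + I * (√(α ^ 2 + normSq β) : ℂ) * (ξ k 0 0 - ξ k 1 1)
        + conj β * ξ (k - 1) 0 1 := by
  simp [XX, trace_fin_two, vecMul, dotProduct]
  ring

lemma kcond_iff (α : ℝ) (β : ℂ) (ξ : ℤ → Mat) :
    Kcond α β ξ ↔ ∀ k, β * ξ (k + 1) 1 0
      + I * (√(α ^ 2 + normSq β) : ℂ) * (ξ k 0 0 - ξ k 1 1) + conj β * ξ (k - 1) 0 1 = 0 := by
  simp only [Kcond, trace_XX_mul_add]

lemma eq_zpow_smul_conjTranspose_of_starSeq {H : ℤ → Mat} (hH : ∀ k, starSeq H k = -H k)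
    (k : ℤ) : H k = (-1 : ℂ) ^ k • (H (-k))ᴴ := by
  have h := hH k
  rw [starSeq] at h
  linear_combination (norm := module) h

lemma conjTranspose_zero_of_starSeq {H : ℤ → Mat} (hH : ∀ k, starSeq H k = -H k) :
    (H 0)ᴴ = H 0 := by
  simpa using (eq_zpow_smul_conjTranspose_of_starSeq hH 0).symm

lemma neg_one_of_starSeq {H : ℤ → Mat} (hH : ∀ k, starSeq H k = -H k) :
    H (-1) = -(H 1)ᴴ := by
  simpa using eq_zpow_smul_conjTranspose_of_starSeq hH (-1)

def posLift (H : ℤ → Mat) (S : Mat) : ℤ → Mat :=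
  fun k => if k < 0 then 0 else if k = 0 then H 0 + S else (2 : ℂ) • H k

section posLift

variable {H : ℤ → Mat} {S : Mat}

@[simp] lemma posLift_of_neg {k : ℤ} (hk : k < 0) : posLift H S k = 0 := if_pos hk

@[simp] lemma posLift_zero : posLift H S 0 = H 0 + S := rfl

@[simp] lemma posLift_of_pos {k : ℤ} (hk : 0 < k) : posLift H S k = (2 : ℂ) • H k := by
  simp [posLift, hk.ne', hk.not_gt]

lemma memL_posLift (hH : memL H) (hS : S.trace = 0) : memL (posLift H S) := by
  refine ⟨?_, fun k => ?_⟩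
  · have hbound : Summable (fun k : ℤ => 2 * ‖H k‖ + if k = 0 then ‖H 0 + S‖ else 0) :=
      (hH.1.mul_left 2).add (summable_of_ne_finset_zero (s := {0}) (by simp_all))
    refine hbound.of_nonneg_of_le (fun _ => norm_nonneg _) (fun k => ?_)
    rcases lt_trichotomy k 0 with hk | rfl | hk
    · simp [hk, hk.ne]
    · simp
    · rw [posLift_of_pos hk, if_neg hk.ne', add_zero, two_smul, two_mul]
      exact norm_add_le _ _
  · rcases lt_trichotomy k 0 with hk | rfl | hk
    · simp [hk]
    · simp [hH.2, hS]
    · simp [hk, hH.2]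

lemma piH_posLift (hH : ∀ k, starSeq H k = -H k) (hS : Sᴴ = -S) : piH (posLift H S) = H := by
  funext k
  rcases lt_trichotomy k 0 with hk | rfl | hk
  · have hHk := eq_zpow_smul_conjTranspose_of_starSeq hH k
    simp only [piH, starSeq, posLift_of_neg hk, posLift_of_pos (neg_pos.mpr hk),
      conjTranspose_smul, star_ofNat]
    rw [smul_comm _ (2 : ℂ), ← hHk]
    module
  · simp only [piH, starSeq, posLift_zero, neg_zero, zpow_zero, one_smul, conjTranspose_add,
      conjTranspose_zero_of_starSeq hH, hS]
    module
  · simp only [piH, starSeq, posLift_of_pos hk, posLift_of_neg (neg_neg_of_pos hk),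
      conjTranspose_zero, smul_zero, neg_zero, sub_zero]
    module

lemma kcond_posLift {α : ℝ} {β : ℂ} (hK : Kcond α β H) (h01 : S 0 1 = H 0 0 1)
    (h10 : S 1 0 = -H 0 1 0)
    (hdiag : β * H 1 1 0 + I * (√(α ^ 2 + normSq β) : ℂ) * (S 0 0 - S 1 1)
      = conj β * H (-1) 0 1) :
    Kcond α β (posLift H S) := by
  rw [kcond_iff] at hK ⊢
  intro k
  rcases lt_trichotomy k 0 with hk | rfl | hk
  · obtain rfl | hk' := (show k ≤ -1 by omega).eq_or_lt
    · simp [h10]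
    · simp [show k + 1 < 0 by omega, hk, show k - 1 < 0 by omega]
  · simp only [zero_add, zero_sub, posLift_of_pos one_pos, posLift_of_neg neg_one_lt_zero,
      posLift_zero, Matrix.smul_apply, Matrix.add_apply, smul_eq_mul,
      Matrix.zero_apply]
    have hK0 := hK 0
    rw [zero_add, zero_sub] at hK0
    linear_combination hK0 + hdiag
  · obtain rfl | hk' := (show 1 ≤ k by omega).eq_or_lt
    · have hK1 := hK 1
      rw [sub_self] at hK1
      simp only [sub_self, posLift_of_pos one_pos, posLift_of_pos (by norm_num : (0 : ℤ) < 1 + 1),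
        posLift_zero, Matrix.smul_apply, Matrix.add_apply, smul_eq_mul, h01]
      linear_combination 2 * hK1
    · simp only [posLift_of_pos (show 0 < k + 1 by omega), posLift_of_pos hk,
        posLift_of_pos (show 0 < k - 1 by omega), Matrix.smul_apply, smul_eq_mul]
      linear_combination 2 * hK k

end posLift

def skewCorrection (r : ℝ) (c : ℂ) (A : Mat) : Mat :=
  !![I * (c.re / r : ℝ), A 0 1; -A 1 0, -(I * (c.re / r : ℝ))]

section skewCorrection

variable (r : ℝ) (c : ℂ) {A : Mat}

lemma trace_skewCorrection : (skewCorrection r c A).trace = 0 := by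
  simp [skewCorrection, trace_fin_two]

lemma conjTranspose_skewCorrection (hA : Aᴴ = A) :
    (skewCorrection r c A)ᴴ = -skewCorrection r c A := by
  have hA' (i j : Fin 2) : conj (A i j) = A j i := by
    simpa using congrFun (congrFun hA j) i
  ext i j
  fin_cases i <;> fin_cases j <;> simp [skewCorrection, hA']

lemma mul_sub_skewCorrection {r : ℝ} (hr : r ≠ 0) :
    I * r * (skewCorrection r c A 0 0 - skewCorrection r c A 1 1) = -(c + conj c) := by
  have hr' : (r : ℂ) ≠ 0 := ofReal_ne_zero.mpr hr
  rw [add_conj]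
  simp [skewCorrection]
  field_simp
  linear_combination (2 * c.re) * I_sq

end skewCorrection

/-- For every `H ∈ K_𝔛 ∩ ΛH` there exists `P ∈ K^{≥0}_𝔛` whose zeroth coefficient
preserves the line `ℂ·e₁` (its `(2,1)`-entry vanishes) and with `π^H(P) = H`. -/
theorem stmt14 (α : ℝ) (hα : 0 < α) (β : ℂ) :
    ∀ H, memL H → Kcond α β H → (∀ k, starSeq H k = -H k) →
      ∃ P, memL P ∧ Kcond α β P ∧ (∀ k < 0, P k = 0) ∧
        P 0 1 0 = 0 ∧ piH P = H := by
  intro H hH hK hstar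
  have hr : √(α ^ 2 + normSq β) ≠ 0 :=
    (Real.sqrt_pos.mpr (add_pos_of_pos_of_nonneg (pow_pos hα 2) (normSq_nonneg β))).ne'
  set S := skewCorrection √(α ^ 2 + normSq β) (β * H 1 1 0) (H 0)
  have hdiag : β * H 1 1 0 + I * (√(α ^ 2 + normSq β) : ℂ) * (S 0 0 - S 1 1)
      = conj β * H (-1) 0 1 := by
    rw [mul_sub_skewCorrection _ hr, neg_one_of_starSeq hstar]
    simp
  refine ⟨posLift H S, memL_posLift hH (trace_skewCorrection _ _),
    kcond_posLift hK rfl rfl hdiag, fun k hk => posLift_of_neg hk, ?_,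
    piH_posLift hstar <| conjTranspose_skewCorrection _ _ <| conjTranspose_zero_of_starSeq hstar⟩
  simp [S, skewCorrection]
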